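/- Let Q be a set of entailments satisfying EP-1 (every Q-antecedent is Q-justified). If p and q are Q-preantecedents with p ⌣ q (compatible), then their join p ⊔ q is a Q-preantecedent. -/

import Mathlib

/-!
STATEMENT 8: if `Q` is a set of entailments satisfying EP-1, the join of two
compatible `Q`-preantecedents is a `Q`-preantecedent.
-/

namespace Stmt8

/-- Protocols over a set of atoms `At`: atoms, coproducts and products of
finite families (events are represented by positions in the list). -/
inductive Proto (At : Type) : Type where
  | atom : At → Proto At
  | sum : List (Proto At) → Proto At
  | prod : List (Proto At) → Proto At

/-- The three roles a protocol state may have. -/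
inductive Role : Type where
  | src  -- source role 0
  | snk  -- sink role 1
  | flow -- flow role +
deriving DecidableEq

/-- Interchanging the source and sink roles. -/
def Role.swap : Role → Role
  | .src => .snk
  | .snk => .src
  | .flow => .flow

/-- The role of a coproduct state, from the roles of its components. -/
def sumRole (rs : List Role) : Role :=
  if ∀ r ∈ rs, r = Role.src then .src
  else if rs.count Role.snk = 1 ∧ rs.count Role.flow = 0 then .snk
  else .flow

/-- The role of a product state, from the roles of its components. -/
def prodRole (rs : List Role) : Role :=
  if ∀ r ∈ rs, r = Role.snk then .snk
  else if rs.count Role.src = 1 ∧ rs.count Role.flow = 0 then .src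
  else .flow

mutual
/-- The role of a protocol state on a domain channel. -/
def roleD {At : Type} : Proto At → Role
  | .atom _ => .flow
  | .sum Xs => sumRole (rolesD Xs)
  | .prod Xs => prodRole (rolesD Xs)

def rolesD {At : Type} : List (Proto At) → List Role
  | [] => []
  | X :: Xs => roleD X :: rolesD Xs
end

/-- A channel is either a domain channel or a codomain channel. -/
inductive Side : Type where
  | dom
  | cod
deriving DecidableEq

/-- The role of a protocol state on a channel of the given side (codomain
roles are computed dually). -/
def role {At : Type} : Side → Proto At → Role
  | .dom, X => roleD X
  | .cod, X => (roleD X).swap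

/-- Directions of events: input or output. -/
inductive Dir : Type where
  | inp
  | out
deriving DecidableEq

def Dir.flip : Dir → Dir
  | .inp => .out
  | .out => .inp

/-- An event: a direction together with the position of the selected
component. -/
abbrev Ev : Type := Dir × ℕ

/-- The subprotocol reached by a transition along event `i`. -/
def Proto.next {At : Type} : Proto At → ℕ → Option (Proto At)
  | .atom _, _ => none
  | .sum Xs, i => Xs[i]?
  | .prod Xs, i => Xs[i]?

/-- The direction of events a protocol state expects, on a channel of the
given side (coproducts expect inputs on domain channels and outputs on
codomain channels; products dually). -/
def expects {At : Type} (s : Side) : Proto At → Option Dir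
  | .sum _ => some (match s with | .dom => .inp | .cod => .out)
  | .prod _ => some (match s with | .dom => .out | .cod => .inp)
  | .atom _ => none

/-- A legal transition of a protocol state on a channel of side `s`: it starts
at a state with flow role, has the direction the state expects, and an output
transition does not end at a sink-role state while an input transition does
not end at a source-role state. -/
def StepP {At : Type} (s : Side) (P : Proto At) (e : Ev) (P' : Proto At) : Prop :=
  role s P = .flow ∧ expects s P = some e.1 ∧ P.next e.2 = some P' ∧
    (e.1 = Dir.out → role s P' ≠ .snk) ∧ (e.1 = Dir.inp → role s P' ≠ .src)

/-- A legal channel behaviour: a finite sequence of legal transitions,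
reaching the indicated state. -/
inductive StepsP {At : Type} (s : Side) : Proto At → List Ev → Proto At → Prop where
  | nil (P : Proto At) : StepsP s P [] P
  | cons {P P' P'' : Proto At} {e : Ev} {l : List Ev} :
      StepP s P e P' → StepsP s P' l P'' → StepsP s P (e :: l) P''

def Proto.IsAtom {At : Type} : Proto At → Prop
  | .atom _ => True
  | _ => False

/-- A finite family of channels, each assigned a protocol and partitioned
into domain channels and codomain channels. -/
structure Setting (At Chan : Type) where
  active : Set Chan
  finite : active.Finite
  side : Chan → Side
  proto : Chan → Proto At

/-- A behaviour: a tuple of channel behaviours, one per channel. -/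
abbrev Behav (Chan : Type) : Type := Chan → List Ev

variable {At Chan M : Type}

/-- The behaviour `p` reaches the frontier state `P` on channel `c`. -/
def Setting.Reaches (S : Setting At Chan) (p : Behav Chan) (c : Chan) (P : Proto At) : Prop :=
  StepsP (S.side c) (S.proto c) (p c) P

/-- `p` is a legal behaviour for the setting `S`. -/
def Setting.IsBehav (S : Setting At Chan) (p : Behav Chan) : Prop :=
  (∀ c ∉ S.active, p c = []) ∧ ∀ c ∈ S.active, ∃ P, S.Reaches p c P

/-- An antecedent behaviour: every frontier state has flow or sink role. -/
def Setting.Antecedent (S : Setting At Chan) (p : Behav Chan) : Prop :=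
  S.IsBehav p ∧ ∀ c ∈ S.active, ∀ P, S.Reaches p c P → role (S.side c) P ≠ .src

/-- A saturated behaviour: every frontier state is atomic, has sink role,
or is an output state with flow role. -/
def Setting.Saturated (S : Setting At Chan) (p : Behav Chan) : Prop :=
  S.IsBehav p ∧ ∀ c ∈ S.active, ∀ P, S.Reaches p c P →
    P.IsAtom ∨ role (S.side c) P = .snk ∨
      (expects (S.side c) P = some Dir.out ∧ role (S.side c) P = .flow)

/-- `p ⊑ q`: componentwise prefix of behaviours. -/
def BPrefix (p q : Behav Chan) : Prop := ∀ c, p c <+: q c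

/-- `p ⊑_i q`: `p` is a prefix of `q` and all intervening events are inputs. -/
def BPrefixI (p q : Behav Chan) : Prop :=
  ∀ c, ∃ r : List Ev, q c = p c ++ r ∧ ∀ e ∈ r, e.1 = Dir.inp

/-- Compatibility `p ⌣ q` of behaviours. -/
def Compat (p q : Behav Chan) : Prop := ∀ c, p c <+: q c ∨ q c <+: p c

/-- The join `p ⊔ q` of (compatible) behaviours: the longer component on each
channel. -/
def bjoin (p q : Behav Chan) : Behav Chan :=
  fun c => if (p c).length ≤ (q c).length then q c else p c

/-- The empty behaviour. -/
def emptyB : Behav Chan := fun _ => []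

/-- `p * e` on channel `c`: append the event `e` at the end of the channel
behaviour of `c`. -/
def bapp [DecidableEq Chan] (p : Behav Chan) (c : Chan) (e : Ev) : Behav Chan :=
  Function.update p c (p c ++ [e])

/-- `e * p` on channel `c`: prepend the event `e` at the beginning of the
channel behaviour of `c`. -/
def bpre [DecidableEq Chan] (c : Chan) (e : Ev) (p : Behav Chan) : Behav Chan :=
  Function.update p c (e :: p c)

/-- The conclusion of an entailment: an output event `ᾱ[a]` or an atomic
morphism. -/
inductive Concl (Chan M : Type) : Type where
  | out : Chan → ℕ → Concl Chan M
  | mor : M → Concl Chan M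

/-- An entailment: an antecedent behaviour together with a conclusion. -/
abbrev Ent (Chan M : Type) : Type := Behav Chan × Concl Chan M

/-- The event `e` is a legal next event on channel `c` given the behaviour
`p`. -/
def Setting.CanStep (S : Setting At Chan) (p : Behav Chan) (c : Chan) (e : Ev) : Prop :=
  ∃ P P', S.Reaches p c P ∧ StepP (S.side c) P e P'

/-- Validity of an entailment: the antecedent is an antecedent behaviour and
the conclusion is a legal output event, resp. an atomic morphism on the
(all-atomic) frontier. -/
def Setting.ValidEnt (S : Setting At Chan) : Ent Chan M → Prop
  | (p, .out α a) => S.Antecedent p ∧ α ∈ S.active ∧ S.CanStep p α (Dir.out, a)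
  | (p, .mor _) => S.Antecedent p ∧ ∀ c ∈ S.active, ∃ A, S.Reaches p c (.atom A)

/-- A set of entailments. -/
def EntSet (S : Setting At Chan) (Q : Set (Ent Chan M)) : Prop :=
  ∀ e ∈ Q, S.ValidEnt e

/-- All output events occurring in `p` are `Q`-justified. -/
def Justified [DecidableEq Chan] (S : Setting At Chan) (Q : Set (Ent Chan M))
    (p : Behav Chan) : Prop :=
  ∀ c ∈ S.active, ∀ (l : List Ev) (a : ℕ) (r : List Ev), p c = l ++ (Dir.out, a) :: r →
    ∃ u : Behav Chan, (u, Concl.out c a) ∈ Q ∧ u c = l ∧ BPrefix (bapp u c (Dir.out, a)) p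

/-- A `Q`-preantecedent: a `Q`-justified antecedent behaviour. -/
def Preant [DecidableEq Chan] (S : Setting At Chan) (Q : Set (Ent Chan M))
    (p : Behav Chan) : Prop :=
  S.Antecedent p ∧ Justified S Q p

/-- A `Q`-antecedent: the antecedent of some entailment of `Q`. -/
def QAnt (Q : Set (Ent Chan M)) (p : Behav Chan) : Prop := ∃ x, (p, x) ∈ Q

section EP

variable [DecidableEq Chan]

/-- EP-1: every `Q`-antecedent is `Q`-justified. -/
def EP1 (S : Setting At Chan) (Q : Set (Ent Chan M)) : Prop :=
  ∀ p, QAnt Q p → Justified S Q p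

/-- EP-2: compatible entailments with equal channel behaviour on the output
channel conclude the same output event. -/
def EP2 (Q : Set (Ent Chan M)) : Prop :=
  ∀ (p q : Behav Chan) (α : Chan) (a b : ℕ),
    (p, Concl.out α a) ∈ Q → (q, Concl.out α b) ∈ Q → p α = q α → Compat p q → a = b

/-- EP-3: between a preantecedent and a saturated preantecedent above it along
inputs there is a `Q`-antecedent. -/
def EP3 (S : Setting At Chan) (Q : Set (Ent Chan M)) : Prop :=
  ∀ p q, Preant S Q p → Preant S Q q → S.Saturated q → BPrefixI p q →
    ∃ p', QAnt Q p' ∧ BPrefixI p p' ∧ BPrefixI p' q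

/-- EP-4. -/
def EP4 (Q : Set (Ent Chan M)) : Prop :=
  ∀ (α β : Chan) (a b : ℕ) (p q : Behav Chan), α ≠ β →
    (p, Concl.out α a) ∈ Q → (q, Concl.out β b) ∈ Q → p α = q α → BPrefix p q →
    (bapp q α (Dir.out, a), Concl.out β b) ∈ Q

/-- EP-5. -/
def EP5 (S : Setting At Chan) (Q : Set (Ent Chan M)) : Prop :=
  ∀ (α β : Chan) (a b : ℕ) (p : Behav Chan), α ≠ β →
    (p, Concl.out α a) ∈ Q → β ∈ S.active → S.CanStep p β (Dir.inp, b) →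
    (bapp p β (Dir.inp, b), Concl.out α a) ∈ Q

/-- EP-6. -/
def EP6 (Q : Set (Ent Chan M)) : Prop :=
  ∀ (α β : Chan) (a b : ℕ) (p : Behav Chan), α ≠ β →
    (bapp p β (Dir.out, b), Concl.out α a) ∈ Q → (p, Concl.out α a) ∈ Q

/-- EP-7. -/
def EP7 (S : Setting At Chan) (Q : Set (Ent Chan M)) : Prop :=
  ∀ (α β : Chan) (a : ℕ) (p : Behav Chan), α ≠ β → Preant S Q p → β ∈ S.active →
    (∃ b, S.CanStep p β (Dir.inp, b)) →
    (∀ b, S.CanStep p β (Dir.inp, b) → (bapp p β (Dir.inp, b), Concl.out α a) ∈ Q) →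
    (p, Concl.out α a) ∈ Q

/-- A proto-process: a set of entailments satisfying EP-1, EP-2 and EP-3. -/
def ProtoProcess (S : Setting At Chan) (Q : Set (Ent Chan M)) : Prop :=
  EntSet S Q ∧ EP1 S Q ∧ EP2 Q ∧ EP3 S Q

/-- An extensional process: a set of entailments satisfying EP-1 – EP-7. -/
def ExtProcess (S : Setting At Chan) (Q : Set (Ent Chan M)) : Prop :=
  ProtoProcess S Q ∧ EP4 Q ∧ EP5 S Q ∧ EP6 Q ∧ EP7 S Q

end EP

/-! The conditions defining a preantecedent are channelwise, except that a justifying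
entailment `u ⊢ ᾱ[a]` of an output event of `p` only needs `u * ᾱ[a] ⊑ p`, which survives
passing to any behaviour above `p`. Each channel of `p ⊔ q` is a channel of `p` or of `q`,
both of which lie below `p ⊔ q` when `p ⌣ q`. -/

theorem bjoin_eq_or (p q : Behav Chan) (c : Chan) : bjoin p q c = p c ∨ bjoin p q c = q c := by
  unfold bjoin
  split_ifs <;> simp

theorem Compat.prefix_bjoin_left {p q : Behav Chan} (h : Compat p q) : BPrefix p (bjoin p q) := by
  intro c
  unfold bjoin
  split_ifs with hlen
  · exact (h c).elim id fun hqp => hqp.eq_of_length_le hlen ▸ List.prefix_refl _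
  · exact List.prefix_refl _

theorem Compat.prefix_bjoin_right {p q : Behav Chan} (h : Compat p q) : BPrefix q (bjoin p q) := by
  intro c
  unfold bjoin
  split_ifs with hlen
  · exact List.prefix_refl _
  · exact (h c).elim (fun hpq => absurd hpq.length_le hlen) id

theorem Setting.Antecedent.of_forall_exists {S : Setting At Chan} {r : Behav Chan}
    (h : ∀ c, ∃ s, S.Antecedent s ∧ r c = s c) : S.Antecedent r := by
  refine ⟨⟨fun c hc => ?_, fun c hc => ?_⟩, fun c hc P hP => ?_⟩ <;>
    obtain ⟨s, ⟨⟨hs_nil, hs_reach⟩, hs_role⟩, hrs⟩ := h c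
  · rw [hrs]
    exact hs_nil c hc
  · obtain ⟨P, hP⟩ := hs_reach c hc
    exact ⟨P, by rwa [Setting.Reaches, hrs]⟩
  · exact hs_role c hc P (by rwa [Setting.Reaches, ← hrs])

section Justification

variable [DecidableEq Chan] {S : Setting At Chan} {Q : Set (Ent Chan M)}

theorem Justified.of_forall_exists {r : Behav Chan}
    (h : ∀ c, ∃ s, Justified S Q s ∧ BPrefix s r ∧ r c = s c) : Justified S Q r := by
  intro c hc l a t hr
  obtain ⟨s, hs, hsr, hrs⟩ := h c
  obtain ⟨u, huQ, huc, hus⟩ := hs c hc l a t (hrs ▸ hr)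
  exact ⟨u, huQ, huc, fun d => (hus d).trans (hsr d)⟩

theorem Preant.of_forall_exists {r : Behav Chan}
    (h : ∀ c, ∃ s, Preant S Q s ∧ BPrefix s r ∧ r c = s c) : Preant S Q r := by
  choose s hs hsr hrs using h
  exact ⟨Setting.Antecedent.of_forall_exists fun c => ⟨s c, (hs c).1, hrs c⟩,
    Justified.of_forall_exists fun c => ⟨s c, (hs c).2, hsr c, hrs c⟩⟩

end Justification

theorem join_preant {At Chan M : Type} [DecidableEq Chan]
    (S : Setting At Chan) (Q : Set (Ent Chan M))
    (hQ : EntSet S Q) (h1 : EP1 S Q) :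
    ∀ p q, Preant S Q p → Preant S Q q → Compat p q → Preant S Q (bjoin p q) := by
  intro p q hp hq hpq
  refine Preant.of_forall_exists fun c => ?_
  rcases bjoin_eq_or p q c with h | h
  exacts [⟨p, hp, hpq.prefix_bjoin_left, h⟩, ⟨q, hq, hpq.prefix_bjoin_right, h⟩]

end Stmt8
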